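/- (Optimal coherent strategy for block computation of Boolean threshold functions.) Let H denote the binary entropy function H(p) = −p·log₂ p − (1−p)·log₂(1−p) (with H(0)=H(1)=0). Let 0 ≤ p_1 ≤ p_2 ≤ … ≤ p_n ≤ 1 and 1 ≤ θ ≤ n. Then the index i = n−θ+1 attains the minimum in the recursion with cost f = H: for every j ∈ {1,…,n}, H(p_{n−θ+1}) + p_{n−θ+1}·C_H(θ−1; p_{−(n−θ+1)}) + (1−p_{n−θ+1})·C_H(θ; p_{−(n−θ+1)}) ≤ H(p_j) + p_j·C_H(θ−1; p_{−j}) + (1−p_j)·C_H(θ; p_{−j}). In other words, among coherent strategies for block computation of Π_{n−k}(X_1,…,X_n), it is optimal for node k+1 to transmit its entire block first. -/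

import Mathlib

/-!
For sorted `p` the minimum is attained by the pointer strategy: start at node `n - θ`, move one
node to the right after reading a one and one node to the left after reading a zero. Its cost is
`∑ᵢ f(pᵢ) · P(node i is queried)`, with explicit query probabilities. Querying some node `j`
first and following the pointer strategy afterwards changes these probabilities only between `j`
and the pointer, which gives a closed form for the excess cost. For `j` left of the pointer it is
`A_j f(p_j) - p_j ∑_{j < i ≤ n - θ} c_i f(p_i)`, where `A_j` is the probability of at least `θ`
ones right of `j` and `A_j - A_{j+1} = p_{j+1} c_{j+1}`; it is nonnegative by induction on
`n - θ - j`, since concavity and `f 0 = 0` make `f(x) / x` antitone. Nodes right of the pointer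
are handled in the same way after exchanging ones and zeros, `x ↦ 1 - x`, using `f 1 = 0`. By
induction on `n` the pointer strategy therefore solves the recursion defining `C_f`, and `H` is
concave and vanishes at `0` and `1`.
-/

/-- The optimal expected cost `C_f(θ; p)` of sequentially computing the Boolean
threshold function `Π_θ` on independent Bernoulli variables with parameters given by
the list `p`, where querying a node with parameter `q` costs `f q`. -/
noncomputable def cost (f : ℝ → ℝ) : ℕ → List ℝ → ℝ
  | 0, _ => 0
  | (θ+1), p =>
      if p.length < θ + 1 then 0
      else ⨅ i : Fin p.length,
        (f (p.get i) + p.get i * cost f θ (p.eraseIdx i.1)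
          + (1 - p.get i) * cost f (θ+1) (p.eraseIdx i.1))
termination_by θ p => p.length
decreasing_by
  all_goals (have h := i.isLt; simp [List.length_eraseIdx, h]; omega)

/-- The binary entropy function `H(p) = -p log₂ p - (1-p) log₂ (1-p)`
(with the conventions `H(0) = H(1) = 0`, automatic since `Real.logb 2 0 = 0`). -/
noncomputable def binH (x : ℝ) : ℝ := -(x * Real.logb 2 x) - (1 - x) * Real.logb 2 (1 - x)

open Finset

-- The index in `l` of entry `i` of `l.eraseIdx j`: an `ℕ`-valued `Fin.succAbove`.
def skipIdx (j i : ℕ) : ℕ := if i < j then i else i + 1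

lemma sum_range_eq_add_sum_skipIdx {M : Type*} [AddCommMonoid M] (F : ℕ → M) {n j : ℕ}
    (hj : j < n) : ∑ k ∈ range n, F k = F j + ∑ i ∈ range (n - 1), F (skipIdx j i) := by
  obtain ⟨m, rfl⟩ : ∃ m, n = m + 1 := ⟨n - 1, by omega⟩
  rw [Finset.sum_range, Fin.sum_univ_succAbove _ ⟨j, hj⟩, Nat.add_sub_cancel, Finset.sum_range]
  congr 1
  refine Fintype.sum_congr _ _ fun i => ?_
  simp only [Fin.succAbove, skipIdx, Fin.lt_def, Fin.val_castSucc]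
  split_ifs <;> rfl

lemma sum_Ico_succ_eq_sum_range_sub {M : Type*} [AddCommMonoid M] (H : ℕ → M) (j s : ℕ) :
    ∑ i ∈ Ico j s, H (i + 1) = ∑ u ∈ range (s - j), H (s - u) := by
  rw [sum_Ico_eq_sum_range, ← sum_range_reflect]
  exact sum_congr rfl fun u hu => congrArg H (by simp at hu; omega)

namespace List

lemma getD_eraseIdx {α : Type*} (l : List α) (d : α) (i j : ℕ) :
    (l.eraseIdx j).getD i d = l.getD (skipIdx j i) d := by
  simp only [getD_eq_getElem?_getD, getElem?_eraseIdx, skipIdx]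
  split <;> rfl

lemma drop_eraseIdx_eq_eraseIdx_drop {α : Type*} (l : List α) {j k : ℕ} (h : k ≤ j) :
    (l.eraseIdx j).drop k = (l.drop k).eraseIdx (j - k) := by
  apply ext_getElem?; intro i; simp only [getElem?_drop, getElem?_eraseIdx]
  split_ifs <;> first | rfl | (congr 1; omega)

lemma drop_eraseIdx_eq_drop_succ {α : Type*} (l : List α) {j k : ℕ} (h : j ≤ k) :
    (l.eraseIdx j).drop k = l.drop (k + 1) := by
  apply ext_getElem?; intro i; simp only [getElem?_drop, getElem?_eraseIdx]
  rw [if_neg (by omega)]; congr 1; omega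

lemma take_eraseIdx_eq_eraseIdx_take {α : Type*} (l : List α) {j k : ℕ} (h : j ≤ k) :
    (l.eraseIdx j).take k = (l.take (k + 1)).eraseIdx j := by
  apply ext_getElem?; intro i; simp only [getElem?_take, getElem?_eraseIdx]
  split_ifs <;> first | rfl | omega

lemma getD_drop {α : Type*} (l : List α) (d : α) (k i : ℕ) :
    (l.drop k).getD i d = l.getD (k + i) d := by
  simp only [getD_eq_getElem?_getD, getElem?_drop]

lemma getD_take {α : Type*} (l : List α) (d : α) {k i : ℕ} (h : i < k) :
    (l.take k).getD i d = l.getD i d := by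
  simp only [getD_eq_getElem?_getD, getElem?_take, if_pos h]

lemma getD_mem_Icc {p : List ℝ} (h01 : ∀ x ∈ p, x ∈ Set.Icc (0 : ℝ) 1) (i : ℕ) :
    p.getD i 0 ∈ Set.Icc (0 : ℝ) 1 := by
  rcases lt_or_ge i p.length with hi | hi
  · rw [getD_eq_getElem _ _ hi]
    exact h01 _ (getElem_mem hi)
  · rw [getD_eq_default _ _ hi]
    exact ⟨le_rfl, zero_le_one⟩

lemma Pairwise.getD_le_getD {p : List ℝ} (hp : p.Pairwise (· ≤ ·)) {i k : ℕ} (hik : i ≤ k)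
    (hk : k < p.length) : p.getD i 0 ≤ p.getD k 0 := by
  rcases hik.eq_or_lt with rfl | hik
  · rfl
  rw [getD_eq_getElem _ _ (hik.trans hk), getD_eq_getElem _ _ hk]
  exact pairwise_iff_getElem.1 hp i k (hik.trans hk) hk hik

end List

-- `P(at least k ones)` for independent Bernoulli(`qᵢ`) variables; on `q.map (1 - ·)`, of zeros.
def probAtLeast : ℕ → List ℝ → ℝ
  | 0, _ => 1
  | _ + 1, [] => 0
  | k + 1, x :: q => x * probAtLeast k q + (1 - x) * probAtLeast (k + 1) q

@[simp] lemma probAtLeast_zero (q : List ℝ) : probAtLeast 0 q = 1 := by cases q <;> rfl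

lemma probAtLeast_cons (k : ℕ) (x : ℝ) (q : List ℝ) :
    probAtLeast k (x :: q) = x * probAtLeast (k - 1) q + (1 - x) * probAtLeast k q := by
  cases k with
  | zero => simp
  | succ k => rfl

lemma probAtLeast_of_length_lt : ∀ {k : ℕ} {q : List ℝ}, q.length < k → probAtLeast k q = 0
  | k + 1, [], _ => rfl
  | k + 1, x :: q, h => by
    simp only [List.length_cons] at h
    rw [probAtLeast_cons, Nat.add_sub_cancel, probAtLeast_of_length_lt (by omega),
      probAtLeast_of_length_lt (by omega)]
    ring

lemma probAtLeast_nonneg : ∀ (k : ℕ) {q : List ℝ}, (∀ x ∈ q, x ∈ Set.Icc (0 : ℝ) 1) →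
    0 ≤ probAtLeast k q
  | 0, _, _ => by simp
  | k + 1, [], _ => le_rfl
  | k + 1, x :: q, h => by
    have hx := h x List.mem_cons_self
    have hq : ∀ y ∈ q, y ∈ Set.Icc (0 : ℝ) 1 := fun y hy => h y (List.mem_cons_of_mem x hy)
    rw [probAtLeast_cons, Nat.add_sub_cancel]
    exact add_nonneg (mul_nonneg hx.1 (probAtLeast_nonneg k hq))
      (mul_nonneg (sub_nonneg.2 hx.2) (probAtLeast_nonneg (k + 1) hq))

lemma probAtLeast_eq_condition : ∀ (k : ℕ) {q : List ℝ} {i : ℕ}, i < q.length →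
    probAtLeast k q = q.getD i 0 * probAtLeast (k - 1) (q.eraseIdx i)
      + (1 - q.getD i 0) * probAtLeast k (q.eraseIdx i)
  | k, x :: q, 0, _ => by simp [probAtLeast_cons]
  | 0, x :: q, i + 1, _ => by simp
  | k + 1, x :: q, i + 1, h => by
    simp only [List.length_cons, Nat.add_lt_add_iff_right] at h
    simp only [List.eraseIdx_cons_succ, List.getD_cons_succ, probAtLeast_cons, Nat.add_sub_cancel]
    rw [probAtLeast_eq_condition k h, probAtLeast_eq_condition (k + 1) h, Nat.add_sub_cancel]
    ring

lemma probAtLeast_map_one_sub_eq_condition (k : ℕ) {q : List ℝ} {i : ℕ} (hi : i < q.length) :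
    probAtLeast k (q.map (1 - ·))
      = (1 - q.getD i 0) * probAtLeast (k - 1) ((q.eraseIdx i).map (1 - ·))
      + q.getD i 0 * probAtLeast k ((q.eraseIdx i).map (1 - ·)) := by
  rw [probAtLeast_eq_condition k (by simpa using hi), List.eraseIdx_map,
    List.getD_eq_getElem _ _ (by simpa using hi), List.getElem_map, List.getD_eq_getElem _ _ hi]
  ring

lemma probAtLeast_drop (k : ℕ) {p : List ℝ} {i : ℕ} (hi : i < p.length) :
    probAtLeast k (p.drop i) = probAtLeast k (p.drop (i + 1))
      + p.getD i 0 * (probAtLeast (k - 1) (p.drop (i + 1)) - probAtLeast k (p.drop (i + 1))) := by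
  rw [List.drop_eq_getElem_cons hi, probAtLeast_cons, List.getD_eq_getElem _ _ hi]
  ring

lemma probAtLeast_map_one_sub_take (k : ℕ) {p : List ℝ} {i : ℕ} (hi : i < p.length) :
    probAtLeast k ((p.take (i + 1)).map (1 - ·)) = probAtLeast k ((p.take i).map (1 - ·))
      + (1 - p.getD i 0) * (probAtLeast (k - 1) ((p.take i).map (1 - ·))
        - probAtLeast k ((p.take i).map (1 - ·))) := by
  rw [probAtLeast_map_one_sub_eq_condition k (i := i) (by simpa using hi),
    ← List.take_eraseIdx_eq_eraseIdx_take _ le_rfl, List.take_eraseIdx_eq_take_of_le _ _ _ le_rfl,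
    List.getD_eq_getElem _ _ (by simpa using hi), List.getElem_take, List.getD_eq_getElem _ _ hi]
  ring

/-- The probability that the pointer strategy queries node `i` of a sorted list `p` when
computing `Π_θ`: started at node `p.length - θ`, it moves one node to the right after reading a
one and one node to the left after reading a zero, so a node left of the start is queried iff
the nodes to its right have not produced `θ` ones, and a node right of it iff the nodes to its
left have not produced `p.length + 1 - θ` zeros. -/
noncomputable def queryProb (θ : ℕ) (p : List ℝ) (i : ℕ) : ℝ :=
  if i < p.length - θ then 1 - probAtLeast θ (p.drop (i + 1))
  else 1 - probAtLeast (p.length + 1 - θ) ((p.take i).map (1 - ·))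

noncomputable def pointerCost (f : ℝ → ℝ) (θ : ℕ) (p : List ℝ) : ℝ :=
  ∑ i ∈ range p.length, f (p.getD i 0) * queryProb θ p i

noncomputable def firstQueryCost (f : ℝ → ℝ) (C : ℕ → List ℝ → ℝ) (θ : ℕ) (p : List ℝ)
    (j : ℕ) : ℝ :=
  f (p.getD j 0) + p.getD j 0 * C (θ - 1) (p.eraseIdx j)
    + (1 - p.getD j 0) * C θ (p.eraseIdx j)

lemma queryProb_of_le {θ : ℕ} {p : List ℝ} {i : ℕ} (hθ : θ ≤ p.length) (hi : i < p.length)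
    (his : i ≤ p.length - θ) : queryProb θ p i = 1 - probAtLeast θ (p.drop (i + 1)) := by
  unfold queryProb
  split_ifs with h
  · rfl
  · rw [probAtLeast_of_length_lt (by simp; omega), probAtLeast_of_length_lt (by simp; omega)]

lemma queryProb_of_ge {θ : ℕ} {p : List ℝ} {i : ℕ} (his : p.length - θ ≤ i) :
    queryProb θ p i = 1 - probAtLeast (p.length + 1 - θ) ((p.take i).map (1 - ·)) :=
  if_neg (by omega)

lemma pointerCost_zero (f : ℝ → ℝ) (p : List ℝ) : pointerCost f 0 p = 0 :=
  sum_eq_zero fun i hi => by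
    rw [queryProb, if_pos (by simpa using hi), probAtLeast_zero, sub_self, mul_zero]

lemma pointerCost_of_length_lt (f : ℝ → ℝ) {θ : ℕ} {p : List ℝ} (h : p.length < θ) :
    pointerCost f θ p = 0 :=
  sum_eq_zero fun i _ => by
    rw [queryProb_of_ge (by omega), show p.length + 1 - θ = 0 by omega, probAtLeast_zero,
      sub_self, mul_zero]

/-- The probability that node `skipIdx j i` is queried when node `j` is queried first and the
pointer strategy is followed afterwards. -/
noncomputable def firstQueryProb (θ : ℕ) (p : List ℝ) (j i : ℕ) : ℝ :=
  p.getD j 0 * queryProb (θ - 1) (p.eraseIdx j) i + (1 - p.getD j 0) * queryProb θ (p.eraseIdx j) i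

lemma firstQueryCost_congr (f : ℝ → ℝ) {C C' : ℕ → List ℝ → ℝ} (θ : ℕ) (p : List ℝ) (j : ℕ)
    (h : ∀ τ, C τ (p.eraseIdx j) = C' τ (p.eraseIdx j)) :
    firstQueryCost f C θ p j = firstQueryCost f C' θ p j := by
  rw [firstQueryCost, firstQueryCost, h, h]

lemma firstQueryCost_sub_pointerCost (f : ℝ → ℝ) (θ : ℕ) {p : List ℝ} {j : ℕ}
    (hj : j < p.length) :
    firstQueryCost f (pointerCost f) θ p j - pointerCost f θ p
      = f (p.getD j 0) * (1 - queryProb θ p j) + ∑ i ∈ range (p.length - 1),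
          f (p.getD (skipIdx j i) 0) * (firstQueryProb θ p j i - queryProb θ p (skipIdx j i)) := by
  rw [firstQueryCost, pointerCost, pointerCost, pointerCost, List.length_eraseIdx_of_lt hj,
    sum_range_eq_add_sum_skipIdx _ hj]
  simp only [List.getD_eraseIdx, firstQueryProb, mul_sum, mul_sub, mul_add, sum_sub_distrib,
    sum_add_distrib]
  ring_nf

section firstQueryProb

variable {θ : ℕ} {p : List ℝ} {i j : ℕ}

lemma firstQueryProb_sub_eq_zero_of_lt (hθ : 1 ≤ θ) (hj : j < p.length) (hij : i < j)
    (his : i < p.length - θ) : firstQueryProb θ p j i - queryProb θ p (skipIdx j i) = 0 := by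
  have hlen : (p.eraseIdx j).length = p.length - 1 := List.length_eraseIdx_of_lt hj
  have hcond := probAtLeast_eq_condition θ (q := p.drop (i + 1)) (i := j - (i + 1))
    (by simp; omega)
  rw [List.getD_drop, show i + 1 + (j - (i + 1)) = j by omega] at hcond
  rw [firstQueryProb, skipIdx, if_pos hij, queryProb_of_le (by omega) (by omega) (by omega),
    queryProb_of_le (by omega) (by omega) (by omega),
    queryProb_of_le (by omega) (by omega) (by omega),
    List.drop_eraseIdx_eq_eraseIdx_drop _ (by omega), hcond]
  ring

lemma firstQueryProb_sub_eq_zero_of_ge (hθ : 1 ≤ θ) (hj : j < p.length) (hji : j ≤ i)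
    (hsi : p.length - θ ≤ i) :
    firstQueryProb θ p j i - queryProb θ p (skipIdx j i) = 0 := by
  have hlen : (p.eraseIdx j).length = p.length - 1 := List.length_eraseIdx_of_lt hj
  have hcond := probAtLeast_map_one_sub_eq_condition (p.length + 1 - θ) (q := p.take (i + 1))
    (i := j) (by simp; omega)
  rw [List.getD_take _ _ (by omega), show p.length + 1 - θ - 1 = p.length - θ by omega] at hcond
  rw [firstQueryProb, skipIdx, if_neg (by omega), queryProb_of_ge (by omega),
    queryProb_of_ge (by omega), queryProb_of_ge (by omega), hlen,
    show p.length - 1 + 1 - (θ - 1) = p.length + 1 - θ by omega,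
    show p.length - 1 + 1 - θ = p.length - θ by omega, List.take_eraseIdx_eq_eraseIdx_take _ hji,
    hcond]
  ring

lemma firstQueryProb_sub_of_le_of_lt (hθ : 1 ≤ θ) (hj : j < p.length) (hji : j ≤ i)
    (his : i < p.length - θ) :
    firstQueryProb θ p j i - queryProb θ p (skipIdx j i)
      = -(p.getD j 0 * (probAtLeast (θ - 1) (p.drop (i + 1 + 1))
          - probAtLeast θ (p.drop (i + 1 + 1)))) := by
  have hlen : (p.eraseIdx j).length = p.length - 1 := List.length_eraseIdx_of_lt hj
  rw [firstQueryProb, skipIdx, if_neg (by omega), queryProb_of_le (by omega) (by omega) (by omega),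
    queryProb_of_le (by omega) (by omega) (by omega),
    queryProb_of_le (by omega) (by omega) (by omega),
    List.drop_eraseIdx_eq_drop_succ _ (by omega)]
  ring

lemma firstQueryProb_sub_of_ge_of_lt (hθ : 1 ≤ θ) (hj : j < p.length) (hsi : p.length - θ ≤ i)
    (hij : i < j) :
    firstQueryProb θ p j i - queryProb θ p (skipIdx j i)
      = -((1 - p.getD j 0) * (probAtLeast (p.length - θ) ((p.take i).map (1 - ·))
          - probAtLeast (p.length + 1 - θ) ((p.take i).map (1 - ·)))) := by
  have hlen : (p.eraseIdx j).length = p.length - 1 := List.length_eraseIdx_of_lt hj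
  rw [firstQueryProb, skipIdx, if_pos hij, queryProb_of_ge (by omega),
    queryProb_of_ge (by omega), queryProb_of_ge (by omega), hlen,
    show p.length - 1 + 1 - (θ - 1) = p.length + 1 - θ by omega,
    show p.length - 1 + 1 - θ = p.length - θ by omega,
    List.take_eraseIdx_eq_take_of_le _ _ _ hij.le]
  ring

end firstQueryProb

lemma ConcaveOn.mul_map_le_mul_map {g : ℝ → ℝ} (hg : ConcaveOn ℝ (Set.Icc 0 1) g) (hg0 : g 0 = 0)
    {a b : ℝ} (ha : 0 ≤ a) (hab : a ≤ b) (hb : b ≤ 1) : a * g b ≤ b * g a := by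
  rcases ha.eq_or_lt with rfl | ha
  · simp [hg0]
  have hsec := hg.neg.secant_mono (a := 0) (x := a) (y := b) ⟨le_rfl, zero_le_one⟩
    ⟨ha.le, hab.trans hb⟩ ⟨ha.le.trans hab, hb⟩ ha.ne' (ha.trans_le hab).ne' hab
  simp only [Pi.neg_apply, hg0, neg_zero, sub_zero] at hsec
  rw [div_le_div_iff₀ ha (ha.trans_le hab)] at hsec
  linarith

lemma ConcaveOn.comp_one_sub {f : ℝ → ℝ} (hf : ConcaveOn ℝ (Set.Icc 0 1) f) :
    ConcaveOn ℝ (Set.Icc 0 1) (fun x => f (1 - x)) := by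
  refine ⟨convex_Icc 0 1, fun x hx y hy a b ha hb hab => ?_⟩
  convert hf.2 (Set.Icc.one_sub_mem hx) (Set.Icc.one_sub_mem hy) ha hb hab using 2
  simp only [smul_eq_mul]
  linear_combination -hab

lemma mul_sum_le_of_concaveOn {g : ℝ → ℝ} (hg : ConcaveOn ℝ (Set.Icc 0 1) g) (hg0 : g 0 = 0)
    {x A c : ℕ → ℝ} {d : ℕ} (hx : ∀ u ≤ d, x u ∈ Set.Icc (0 : ℝ) 1)
    (hanti : ∀ u < d, x (u + 1) ≤ x u) (hA : ∀ u ≤ d, 0 ≤ A u) (hA0 : A 0 = 0)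
    (hAc : ∀ u < d, A (u + 1) = A u + x u * c u) :
    x d * ∑ u ∈ range d, c u * g (x u) ≤ A d * g (x d) := by
  induction d with
  | zero => simp [hA0]
  | succ d ih =>
    have ih := ih (fun u hu => hx u (by omega)) (fun u hu => hanti u (by omega))
      (fun u hu => hA u (by omega)) (fun u hu => hAc u (by omega))
    have hratio := hg.mul_map_le_mul_map hg0 (hx (d + 1) le_rfl).1 (hanti d (by omega))
      (hx d (by omega)).2
    rcases (hx d (by omega)).1.eq_or_lt with hd | hd
    · have : x (d + 1) = 0 := le_antisymm (hd ▸ hanti d (by omega)) (hx (d + 1) le_rfl).1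
      simp [this, hg0]
    have key : x d * (A (d + 1) * g (x (d + 1)) - x (d + 1) * ∑ u ∈ range (d + 1), c u * g (x u))
        = A (d + 1) * (x d * g (x (d + 1)) - x (d + 1) * g (x d))
          + x (d + 1) * (A d * g (x d) - x d * ∑ u ∈ range d, c u * g (x u)) := by
      rw [sum_range_succ]
      linear_combination (x (d + 1) * g (x d)) * hAc d (by omega)
    rw [← sub_nonneg]
    refine nonneg_of_mul_nonneg_right ?_ hd
    rw [key]
    exact add_nonneg (mul_nonneg (hA _ le_rfl) (by linarith))
      (mul_nonneg (hx _ le_rfl).1 (by linarith))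

section excessCost

variable (f : ℝ → ℝ) {θ : ℕ} {p : List ℝ} {j : ℕ}

lemma firstQueryCost_sub_pointerCost_of_le (hθ : 1 ≤ θ) (hθn : θ ≤ p.length)
    (hjs : j ≤ p.length - θ) :
    firstQueryCost f (pointerCost f) θ p j - pointerCost f θ p
      = probAtLeast θ (p.drop (j + 1)) * f (p.getD j 0)
        - p.getD j 0 * ∑ u ∈ range (p.length - θ - j),
          (probAtLeast (θ - 1) (p.drop (p.length - θ - u + 1))
            - probAtLeast θ (p.drop (p.length - θ - u + 1))) * f (p.getD (p.length - θ - u) 0) := by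
  rw [firstQueryCost_sub_pointerCost f θ (by omega), queryProb_of_le hθn (by omega) hjs,
    ← sum_subset (s₁ := Ico j (p.length - θ)) (fun i hi => by simp at hi ⊢; omega)]
  · rw [← sum_Ico_succ_eq_sum_range_sub (fun k => (probAtLeast (θ - 1) (p.drop (k + 1))
      - probAtLeast θ (p.drop (k + 1))) * f (p.getD k 0)), mul_sum, sub_eq_add_neg _ (∑ i ∈ _, _),
      ← sum_neg_distrib]
    congr 1
    · ring
    refine sum_congr rfl fun i hi => ?_
    rw [mem_Ico] at hi
    rw [firstQueryProb_sub_of_le_of_lt hθ (by omega) hi.1 hi.2, skipIdx, if_neg (by omega)]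
    ring
  · intro i hi hi'
    simp only [mem_range, mem_Ico, not_and_or, not_le, not_lt] at hi hi'
    rcases hi' with hij | hsi
    · rw [firstQueryProb_sub_eq_zero_of_lt hθ (by omega) hij (by omega), mul_zero]
    · rw [firstQueryProb_sub_eq_zero_of_ge hθ (by omega) (by omega) hsi, mul_zero]

lemma firstQueryCost_sub_pointerCost_of_ge (hθ : 1 ≤ θ) (hsj : p.length - θ ≤ j)
    (hj : j < p.length) :
    firstQueryCost f (pointerCost f) θ p j - pointerCost f θ p
      = probAtLeast (p.length + 1 - θ) ((p.take j).map (1 - ·)) * f (p.getD j 0)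
        - (1 - p.getD j 0) * ∑ u ∈ range (j - (p.length - θ)),
          (probAtLeast (p.length - θ) ((p.take (p.length - θ + u)).map (1 - ·))
            - probAtLeast (p.length + 1 - θ) ((p.take (p.length - θ + u)).map (1 - ·)))
            * f (p.getD (p.length - θ + u) 0) := by
  rw [firstQueryCost_sub_pointerCost f θ hj, queryProb_of_ge hsj,
    ← sum_subset (s₁ := Ico (p.length - θ) j) (fun i hi => by simp at hi ⊢; omega)]
  · rw [← sum_Ico_eq_sum_range (fun k => (probAtLeast (p.length - θ) ((p.take k).map (1 - ·))
      - probAtLeast (p.length + 1 - θ) ((p.take k).map (1 - ·))) * f (p.getD k 0)), mul_sum,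
      sub_eq_add_neg _ (∑ i ∈ _, _), ← sum_neg_distrib]
    congr 1
    · ring
    refine sum_congr rfl fun i hi => ?_
    rw [mem_Ico] at hi
    rw [firstQueryProb_sub_of_ge_of_lt hθ hj hi.1 hi.2, skipIdx, if_pos hi.2]
    ring
  · intro i hi hi'
    simp only [mem_range, mem_Ico, not_and_or, not_le, not_lt] at hi hi'
    rcases hi' with his | hji
    · rw [firstQueryProb_sub_eq_zero_of_lt hθ hj (by omega) his, mul_zero]
    · rw [firstQueryProb_sub_eq_zero_of_ge hθ hj hji (by omega), mul_zero]

lemma firstQueryCost_pointerCost_self (hθ : 1 ≤ θ) (hθn : θ ≤ p.length) :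
    firstQueryCost f (pointerCost f) θ p (p.length - θ) = pointerCost f θ p := by
  rw [← sub_eq_zero, firstQueryCost_sub_pointerCost_of_le f hθ hθn le_rfl, Nat.sub_self,
    sum_range_zero, probAtLeast_of_length_lt (by simp; omega)]
  ring

end excessCost

lemma pointerCost_le_firstQueryCost_of_le {f : ℝ → ℝ} (hf : ConcaveOn ℝ (Set.Icc 0 1) f)
    (hf0 : f 0 = 0) {p : List ℝ} (hp : p.Pairwise (· ≤ ·)) (h01 : ∀ x ∈ p, x ∈ Set.Icc (0 : ℝ) 1)
    {θ : ℕ} (hθ : 1 ≤ θ) (hθn : θ ≤ p.length) {j : ℕ} (hjs : j ≤ p.length - θ) :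
    pointerCost f θ p ≤ firstQueryCost f (pointerCost f) θ p j := by
  have key := mul_sum_le_of_concaveOn hf hf0 (d := p.length - θ - j)
    (x := fun u => p.getD (p.length - θ - u) 0)
    (A := fun u => probAtLeast θ (p.drop (p.length - θ - u + 1)))
    (c := fun u => probAtLeast (θ - 1) (p.drop (p.length - θ - u + 1))
      - probAtLeast θ (p.drop (p.length - θ - u + 1)))
    (fun u _ => p.getD_mem_Icc h01 _) (fun u hu => hp.getD_le_getD (by omega) (by omega))
    (fun u _ => probAtLeast_nonneg θ fun x hx => h01 x (List.mem_of_mem_drop hx))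
    (probAtLeast_of_length_lt (by simp; omega))
    (fun u hu => by
      rw [show p.length - θ - (u + 1) + 1 = p.length - θ - u by omega]
      exact probAtLeast_drop θ (by omega))
  simp only [Nat.sub_sub_self hjs] at key
  rw [← sub_nonneg, firstQueryCost_sub_pointerCost_of_le f hθ hθn hjs]
  linarith

lemma pointerCost_le_firstQueryCost_of_ge {f : ℝ → ℝ} (hf : ConcaveOn ℝ (Set.Icc 0 1) f)
    (hf1 : f 1 = 0) {p : List ℝ} (hp : p.Pairwise (· ≤ ·)) (h01 : ∀ x ∈ p, x ∈ Set.Icc (0 : ℝ) 1)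
    {θ : ℕ} (hθ : 1 ≤ θ) (hθn : θ ≤ p.length) {j : ℕ} (hsj : p.length - θ ≤ j)
    (hj : j < p.length) :
    pointerCost f θ p ≤ firstQueryCost f (pointerCost f) θ p j := by
  have key := mul_sum_le_of_concaveOn hf.comp_one_sub (by simpa using hf1)
    (d := j - (p.length - θ))
    (x := fun u => 1 - p.getD (p.length - θ + u) 0)
    (A := fun u => probAtLeast (p.length + 1 - θ) ((p.take (p.length - θ + u)).map (1 - ·)))
    (c := fun u => probAtLeast (p.length - θ) ((p.take (p.length - θ + u)).map (1 - ·))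
      - probAtLeast (p.length + 1 - θ) ((p.take (p.length - θ + u)).map (1 - ·)))
    (fun u _ => Set.Icc.one_sub_mem (p.getD_mem_Icc h01 _))
    (fun u hu => sub_le_sub_left (hp.getD_le_getD (by omega) (by omega)) 1)
    (fun u _ => probAtLeast_nonneg _ fun x hx => by
      obtain ⟨y, hy, rfl⟩ := List.mem_map.1 hx
      exact Set.Icc.one_sub_mem (h01 y (List.mem_of_mem_take hy)))
    (probAtLeast_of_length_lt (by simp; omega))
    (fun u hu => by
      have h := probAtLeast_map_one_sub_take (p.length + 1 - θ) (p := p)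
        (i := p.length - θ + u) (by omega)
      rw [show p.length + 1 - θ - 1 = p.length - θ by omega] at h
      rw [← add_assoc, h])
  simp only [sub_sub_cancel, Nat.add_sub_cancel' hsj] at key
  rw [← sub_nonneg, firstQueryCost_sub_pointerCost_of_ge f hθ hsj hj]
  linarith

lemma pointerCost_le_firstQueryCost {f : ℝ → ℝ} (hf : ConcaveOn ℝ (Set.Icc 0 1) f)
    (hf0 : f 0 = 0) (hf1 : f 1 = 0) {p : List ℝ} (hp : p.Pairwise (· ≤ ·))
    (h01 : ∀ x ∈ p, x ∈ Set.Icc (0 : ℝ) 1) {θ : ℕ} (hθ : 1 ≤ θ) (hθn : θ ≤ p.length) {j : ℕ}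
    (hj : j < p.length) :
    pointerCost f θ p ≤ firstQueryCost f (pointerCost f) θ p j := by
  rcases le_total j (p.length - θ) with hjs | hsj
  · exact pointerCost_le_firstQueryCost_of_le hf hf0 hp h01 hθ hθn hjs
  · exact pointerCost_le_firstQueryCost_of_ge hf hf1 hp h01 hθ hθn hsj hj

lemma cost_succ (f : ℝ → ℝ) (θ : ℕ) (p : List ℝ) :
    cost f (θ + 1) p = if p.length < θ + 1 then 0
      else ⨅ i : Fin p.length, firstQueryCost f (cost f) (θ + 1) p i := by
  rw [cost]
  split_ifs
  · rfl
  · exact iInf_congr fun i => by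
      rw [firstQueryCost, List.get_eq_getElem, List.getD_eq_getElem _ _ i.2, Nat.add_sub_cancel]

theorem cost_eq_pointerCost {f : ℝ → ℝ} (hf : ConcaveOn ℝ (Set.Icc 0 1) f) (hf0 : f 0 = 0)
    (hf1 : f 1 = 0) (p : List ℝ) (hp : p.Pairwise (· ≤ ·))
    (h01 : ∀ x ∈ p, x ∈ Set.Icc (0 : ℝ) 1) (θ : ℕ) : cost f θ p = pointerCost f θ p := by
  induction hn : p.length using Nat.strong_induction_on generalizing p θ with
  | _ n ih =>
  subst hn
  rcases θ with _ | θ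
  · rw [cost, pointerCost_zero]
  rw [cost_succ]
  split_ifs with hlt
  · rw [pointerCost_of_length_lt f hlt]
  have hfirst : ∀ i : Fin p.length,
      firstQueryCost f (cost f) (θ + 1) p i = firstQueryCost f (pointerCost f) (θ + 1) p i :=
    fun i => firstQueryCost_congr f _ p i fun τ => ih _ (by omega) (p.eraseIdx i)
      (hp.sublist (List.eraseIdx_sublist _ _)) (fun x hx => h01 x (List.mem_of_mem_eraseIdx hx))
      τ (List.length_eraseIdx_of_lt i.2)
  simp only [hfirst]
  have : Nonempty (Fin p.length) := ⟨⟨0, by omega⟩⟩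
  apply le_antisymm
  · refine (ciInf_le ⟨pointerCost f (θ + 1) p, ?_⟩ ⟨p.length - (θ + 1), by omega⟩).trans_eq
      (firstQueryCost_pointerCost_self f (by omega) (by omega))
    rintro _ ⟨i, rfl⟩
    exact pointerCost_le_firstQueryCost hf hf0 hf1 hp h01 (by omega) (by omega) i.2
  · exact le_ciInf fun i =>
      pointerCost_le_firstQueryCost hf hf0 hf1 hp h01 (by omega) (by omega) i.2

theorem firstQueryCost_cost_le {f : ℝ → ℝ} (hf : ConcaveOn ℝ (Set.Icc 0 1) f) (hf0 : f 0 = 0)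
    (hf1 : f 1 = 0) {p : List ℝ} (hp : p.Pairwise (· ≤ ·))
    (h01 : ∀ x ∈ p, x ∈ Set.Icc (0 : ℝ) 1) {θ : ℕ} (hθ : 1 ≤ θ) (hθn : θ ≤ p.length) {j : ℕ}
    (hj : j < p.length) :
    firstQueryCost f (cost f) θ p (p.length - θ) ≤ firstQueryCost f (cost f) θ p j := by
  have hcost : ∀ i, firstQueryCost f (cost f) θ p i = firstQueryCost f (pointerCost f) θ p i :=
    fun i => firstQueryCost_congr f θ p i <| cost_eq_pointerCost hf hf0 hf1 (p.eraseIdx i)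
      (hp.sublist (List.eraseIdx_sublist _ _)) (fun x hx => h01 x (List.mem_of_mem_eraseIdx hx))
  rw [hcost, hcost, firstQueryCost_pointerCost_self f hθ hθn]
  exact pointerCost_le_firstQueryCost hf hf0 hf1 hp h01 hθ hθn hj

lemma binH_eq (x : ℝ) : binH x = (Real.log 2)⁻¹ * Real.binEntropy x := by
  unfold binH Real.binEntropy Real.logb
  rw [Real.log_inv, Real.log_inv]
  ring

lemma concaveOn_binH : ConcaveOn ℝ (Set.Icc 0 1) binH := by
  rw [show binH = fun x => (Real.log 2)⁻¹ • Real.binEntropy x from funext binH_eq]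
  exact Real.strictConcave_binEntropy.concaveOn.smul (inv_nonneg.2 (Real.log_nonneg one_le_two))

/-- Theorem (optimal coherent strategy for block computation of Boolean threshold
functions): with cost given by binary entropy `H` and sorted probabilities
`p_1 ≤ … ≤ p_n`, the 1-based index `n - θ + 1` (0-based index `n - θ`) attains the
minimum in the DP recursion for `C_H(θ; p_1,…,p_n)`; i.e. among coherent strategies
for block computation of `Π_{n-k}` it is optimal for node `k+1` to transmit its
entire block first. -/
theorem stmt_6 (n : ℕ) (p : Fin n → ℝ)
    (hp0 : ∀ i, 0 ≤ p i) (hp1 : ∀ i, p i ≤ 1) (hsorted : Monotone p)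
    (θ : ℕ) (hθ1 : 1 ≤ θ) (hθn : θ ≤ n) (j : Fin n) :
    binH (p ⟨n - θ, by omega⟩)
      + p ⟨n - θ, by omega⟩ * cost binH (θ - 1) ((List.ofFn p).eraseIdx (n - θ))
      + (1 - p ⟨n - θ, by omega⟩) * cost binH θ ((List.ofFn p).eraseIdx (n - θ))
    ≤ binH (p j) + p j * cost binH (θ - 1) ((List.ofFn p).eraseIdx j)
      + (1 - p j) * cost binH θ ((List.ofFn p).eraseIdx j) := by
  have hsorted' : (List.ofFn p).Pairwise (· ≤ ·) :=
    List.pairwise_ofFn.2 fun _ _ h => hsorted h.le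
  have h01 : ∀ x ∈ List.ofFn p, x ∈ Set.Icc (0 : ℝ) 1 := by
    simpa [List.mem_ofFn] using fun i => ⟨hp0 i, hp1 i⟩
  have key := firstQueryCost_cost_le concaveOn_binH (by simp [binH]) (by simp [binH]) hsorted' h01
    hθ1 (by simpa using hθn) (j := j) (by simp)
  simp only [firstQueryCost, List.length_ofFn] at key
  rwa [List.getD_eq_getElem _ _ (by simp; omega), List.getD_eq_getElem _ _ (by simp),
    List.getElem_ofFn, List.getElem_ofFn] at key
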